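/- arXiv:2605.00396 — 7 statements merged into one kernel-verified Lean document; each statement's English description precedes it below -/
import Mathlib

section
/- Let n ≥ 1 and let Λ = diag(λ_1,…,λ_n) be a real diagonal n×n matrix. Then the matrix exponential exp : M(n,ℝ) → M(n,ℝ) is Fréchet differentiable at Λ, and for every matrix E ∈ M(n,ℝ) the Fréchet derivative satisfies, entrywise, ((D exp)(Λ)[E])_{ij} = exp^{[1]}(λ_i, λ_j) · E_{ij} for all 1 ≤ i,j ≤ n, where exp^{[1]}(a,b) = (e^a − e^b)/(a − b) if a ≠ b and exp^{[1]}(a,a) = e^a. -/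
/-!
STATEMENT 0: Fréchet differentiability of the matrix exponential at a real
diagonal matrix `Λ = diag(λ₁,…,λₙ)`, with entrywise Daleckiĭ–Kreĭn formula
`((D exp)(Λ)[E])_{ij} = exp^{[1]}(λ_i, λ_j) · E_{ij}`.
-/

open Matrix

/-- First divided difference of a scalar function `f` with derivative `f'`. -/
noncomputable def divDiff (f f' : ℝ → ℝ) (a b : ℝ) : ℝ :=
  if a = b then f' a else (f a - f b) / (a - b)

attribute [local instance] Matrix.frobeniusNormedAddCommGroup Matrix.frobeniusNormedSpace

attribute [local instance] Matrix.frobeniusNormedRing Matrix.frobeniusNormedAlgebra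

namespace FrechetExpAux

variable {n : ℕ}

lemma exp_of_sq_eq_zero {A : Type*} [NormedRing A] [NormedAlgebra ℝ A] [CompleteSpace A]
    (x : A) (h : x * x = 0) : NormedSpace.exp x = 1 + x := by
  rw [NormedSpace.exp_eq_tsum ℝ]
  show (∑' k : ℕ, (k.factorial : ℝ)⁻¹ • x ^ k) = 1 + x
  rw [tsum_eq_sum (s := Finset.range 2) ?_]
  · simp [Finset.sum_range_succ]
  · intro k hk
    have h2 : 2 ≤ k := by simp at hk; omega
    have : x ^ k = 0 := by
      have : x ^ k = x ^ 2 * x ^ (k - 2) := by rw [← pow_add]; congr 1; omega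
      rw [this, pow_two, h, zero_mul]
    simp [this]

lemma diag_mul_std (v : Fin n → ℝ) (p q : Fin n) :
    Matrix.diagonal v * Matrix.single p q (1:ℝ) = v p • Matrix.single p q 1 := by
  ext i j
  rw [Matrix.diagonal_mul]
  by_cases hi : p = i
  · subst hi; simp [Matrix.single]
  · simp [Matrix.single, hi]

lemma std_mul_diag (v : Fin n → ℝ) (p q : Fin n) :
    Matrix.single p q (1:ℝ) * Matrix.diagonal v = v q • Matrix.single p q 1 := by
  ext i j
  rw [Matrix.mul_diagonal]
  by_cases hj : q = j
  · subst hj; simp [Matrix.single, mul_comm]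
  · simp [Matrix.single, hj]

lemma std_sq (p q : Fin n) (hpq : p ≠ q) :
    Matrix.single p q (1:ℝ) * Matrix.single p q (1:ℝ) = 0 :=
  Matrix.single_mul_single_of_ne _ _ _ _ (fun h => hpq h.symm) _

lemma one_add_smul_mul (E : Matrix (Fin n) (Fin n) ℝ) (hE2 : E * E = 0) (c d : ℝ) :
    (1 + c • E) * (1 + d • E) = 1 + (c + d) • E := by
  simp only [add_mul, mul_add, one_mul, mul_one, smul_mul_assoc, mul_smul_comm, hE2,
    smul_zero, add_smul]
  abel

lemma conj_aux (Λ E : Matrix (Fin n) (Fin n) ℝ) (hE2 : E * E = 0) (a b s : ℝ)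
    (hΛE : Λ * E = a • E) (hEΛ : E * Λ = b • E) :
    (1 + s • E) * Λ * (1 + (-s) • E) = Λ + (s * (b - a)) • E := by
  have hEΛE : E * Λ * E = 0 := by rw [hEΛ, smul_mul_assoc, hE2, smul_zero]
  have expand : (1 + s • E) * Λ * (1 + (-s) • E)
      = Λ + (-s) • (Λ * E) + s • (E * Λ) + (s * (-s)) • (E * Λ * E) := by
    simp only [add_mul, mul_add, one_mul, mul_one, smul_mul_assoc, mul_smul_comm, smul_add,
      smul_smul]
    module
  rw [expand, hEΛE, hΛE, hEΛ, smul_zero, add_zero, smul_smul, smul_smul]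
  have : s * (b - a) = -s * a + s * b := by ring
  rw [this, add_smul]
  abel

lemma exp_diag (v : Fin n → ℝ) :
    NormedSpace.exp (Matrix.diagonal v) = Matrix.diagonal (fun i => Real.exp (v i)) := by
  rw [Matrix.exp_diagonal]
  have : NormedSpace.exp v = fun i => Real.exp (v i) := by
    funext i
    rw [Pi.coe_exp, ← Real.exp_eq_exp_ℝ]
  rw [this]

/-- Closed-form derivative of `t ↦ exp (Λ + t E_{pq})` at `t = 0`. -/
lemma hasDerivAt_exp_line (l : Fin n → ℝ) (p q : Fin n) :
    HasDerivAt
      (fun t : ℝ => NormedSpace.exp (Matrix.diagonal l + t • Matrix.single p q (1:ℝ)))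
      (divDiff Real.exp Real.exp (l p) (l q) • Matrix.single p q 1) 0 := by
  by_cases hpq : p = q
  · -- diagonal direction
    subst hpq
    have hfun : (fun t : ℝ =>
        NormedSpace.exp (Matrix.diagonal l + t • Matrix.single p p (1:ℝ)))
        = fun t : ℝ => NormedSpace.exp (Matrix.diagonal l)
          + (Real.exp (l p + t) - Real.exp (l p)) • Matrix.single p p 1 := by
      funext t
      have h1 : Matrix.diagonal l + t • Matrix.single p p (1:ℝ)
          = Matrix.diagonal (fun i => l i + if p = i then t else 0) := by
        ext i j
        by_cases hj : i = j
        · subst hj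
          by_cases hi : p = i <;> simp [Matrix.single, Matrix.diagonal_apply_eq, hi]
        · have : ¬(p = i ∧ p = j) := by rintro ⟨rfl, rfl⟩; exact hj rfl
          simp [Matrix.single, Matrix.diagonal_apply_ne _ hj, hj, this]
      rw [h1, exp_diag, exp_diag]
      ext i j
      by_cases hj : i = j
      · subst hj
        by_cases hi : p = i
        · subst hi; simp [Matrix.single]
        · simp [Matrix.single, hi]
      · have : ¬(p = i ∧ p = j) := by rintro ⟨rfl, rfl⟩; exact hj rfl
        simp [Matrix.single, Matrix.diagonal_apply_ne _ hj, hj, this]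
    rw [hfun]
    have hφ : HasDerivAt (fun t : ℝ => Real.exp (l p + t) - Real.exp (l p))
        (Real.exp (l p)) 0 := by
      have := ((Real.hasDerivAt_exp (l p + 0)).comp 0
        ((hasDerivAt_id (0:ℝ)).const_add (l p))).sub_const (Real.exp (l p))
      simpa using this
    have hd : divDiff Real.exp Real.exp (l p) (l p) = Real.exp (l p) := by simp [divDiff]
    rw [hd]
    exact (hφ.smul_const _).const_add _
  · have hE2 : Matrix.single p q (1:ℝ) * Matrix.single p q (1:ℝ) = 0 := std_sq p q hpq
    by_cases hl : l p = l q
    · -- commuting nilpotent case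
      have hfun : (fun t : ℝ =>
          NormedSpace.exp (Matrix.diagonal l + t • Matrix.single p q (1:ℝ)))
          = fun t : ℝ => NormedSpace.exp (Matrix.diagonal l)
            + (t * Real.exp (l p)) • Matrix.single p q 1 := by
        funext t
        have hcomm : Commute (Matrix.diagonal l) (t • Matrix.single p q (1:ℝ)) := by
          unfold Commute SemiconjBy
          rw [mul_smul_comm, smul_mul_assoc, diag_mul_std, std_mul_diag, hl]
        have hsq : (t • Matrix.single p q (1:ℝ)) * (t • Matrix.single p q (1:ℝ)) = 0 := by
          rw [smul_mul_assoc, mul_smul_comm, hE2, smul_zero, smul_zero]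
        rw [Matrix.exp_add_of_commute _ _ hcomm]
        erw [exp_of_sq_eq_zero _ hsq]
        rw [mul_add, mul_one,
          mul_smul_comm, exp_diag, diag_mul_std, smul_smul]
      rw [hfun]
      have hd : divDiff Real.exp Real.exp (l p) (l q) = Real.exp (l p) := by
        simp [divDiff, hl]
      rw [hd]
      have hφ : HasDerivAt (fun t : ℝ => t * Real.exp (l p)) (Real.exp (l p)) 0 := by
        simpa using (hasDerivAt_id (0:ℝ)).mul_const (Real.exp (l p))
      exact (hφ.smul_const _).const_add _
    · -- distinct eigenvalues: conjugation
      set c : ℝ := divDiff Real.exp Real.exp (l p) (l q) with hc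
      have hfun : (fun t : ℝ =>
          NormedSpace.exp (Matrix.diagonal l + t • Matrix.single p q (1:ℝ)))
          = fun t : ℝ => NormedSpace.exp (Matrix.diagonal l)
            + (t * c) • Matrix.single p q 1 := by
        funext t
        set E := Matrix.single p q (1:ℝ) with hE
        set s : ℝ := t / (l q - l p) with hs
        have hqp : l q - l p ≠ 0 := fun h => hl (by linarith [sub_eq_zero.mp h])
        have hpq' : l p - l q ≠ 0 := sub_ne_zero.mpr hl
        let u : (Matrix (Fin n) (Fin n) ℝ)ˣ :=
          ⟨1 + s • E, 1 + (-s) • E, by rw [one_add_smul_mul E hE2]; simp,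
            by rw [one_add_smul_mul E hE2]; simp⟩
        have hΛE : Matrix.diagonal l * E = l p • E := diag_mul_std l p q
        have hEΛ : E * Matrix.diagonal l = l q • E := std_mul_diag l p q
        have hconj : (u : Matrix (Fin n) (Fin n) ℝ) * Matrix.diagonal l
            * ((u⁻¹ : (Matrix (Fin n) (Fin n) ℝ)ˣ) : Matrix (Fin n) (Fin n) ℝ)
            = Matrix.diagonal l + t • E := by
          show (1 + s • E) * Matrix.diagonal l * (1 + (-s) • E) = _
          rw [conj_aux (Matrix.diagonal l) E hE2 (l p) (l q) s hΛE hEΛ]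
          congr 2
          rw [hs]
          field_simp
        have hEexp : NormedSpace.exp (Matrix.diagonal l) * E = Real.exp (l p) • E := by
          rw [exp_diag]; exact diag_mul_std _ p q
        have hexpE : E * NormedSpace.exp (Matrix.diagonal l) = Real.exp (l q) • E := by
          rw [exp_diag]; exact std_mul_diag _ p q
        calc NormedSpace.exp (Matrix.diagonal l + t • E)
            = NormedSpace.exp ((u : Matrix (Fin n) (Fin n) ℝ) * Matrix.diagonal l
              * ((u⁻¹ : (Matrix (Fin n) (Fin n) ℝ)ˣ) : Matrix (Fin n) (Fin n) ℝ)) := by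
              rw [hconj]
          _ = (u : Matrix (Fin n) (Fin n) ℝ) * NormedSpace.exp (Matrix.diagonal l)
              * ((u⁻¹ : (Matrix (Fin n) (Fin n) ℝ)ˣ) : Matrix (Fin n) (Fin n) ℝ) :=
              Matrix.exp_units_conj u (Matrix.diagonal l)
          _ = NormedSpace.exp (Matrix.diagonal l)
              + (s * (Real.exp (l q) - Real.exp (l p))) • E := by
              show (1 + s • E) * _ * (1 + (-s) • E) = _
              rw [conj_aux _ E hE2 _ _ s hEexp hexpE]
          _ = NormedSpace.exp (Matrix.diagonal l) + (t * c) • E := by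
              congr 2
              rw [hc, hs]
              simp only [divDiff, if_neg hl]
              field_simp
              ring
      rw [hfun]
      have hφ : HasDerivAt (fun t : ℝ => t * c) c 0 := by
        simpa using (hasDerivAt_id (0:ℝ)).mul_const c
      exact (hφ.smul_const _).const_add _

end FrechetExpAux

theorem frechet_derivative_exp_at_diagonal
    (n : ℕ) (hn : 1 ≤ n) (l : Fin n → ℝ) :
    ∃ D : Matrix (Fin n) (Fin n) ℝ →L[ℝ] Matrix (Fin n) (Fin n) ℝ,
      HasFDerivAt (fun X : Matrix (Fin n) (Fin n) ℝ => NormedSpace.exp X) D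
        (Matrix.diagonal l) ∧
      ∀ (E : Matrix (Fin n) (Fin n) ℝ) (i j : Fin n),
        D E i j = divDiff Real.exp Real.exp (l i) (l j) * E i j := by
  have hA : AnalyticAt ℝ (NormedSpace.exp) (Matrix.diagonal l) := by
    apply NormedSpace.analyticAt_exp_of_mem_ball
    rw [NormedSpace.expSeries_radius_eq_top]
    exact edist_lt_top _ _
  obtain ⟨D, hD⟩ : ∃ D, HasFDerivAt (NormedSpace.exp) D (Matrix.diagonal l) :=
    ⟨_, hA.differentiableAt.hasFDerivAt⟩
  refine ⟨D, hD, ?_⟩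
  have hbasis : ∀ p q : Fin n, D (Matrix.single p q 1) =
      divDiff Real.exp Real.exp (l p) (l q) • Matrix.single p q 1 := by
    intro p q
    have hline : HasDerivAt (fun t : ℝ => Matrix.diagonal l + t • Matrix.single p q (1:ℝ))
        (Matrix.single p q 1) 0 := by
      have h := (((hasDerivAt_id (0:ℝ)).smul_const (Matrix.single p q (1:ℝ))).const_add
        (Matrix.diagonal l))
      simp only [id_eq, one_smul] at h
      exact h
    have hD' : HasFDerivAt (NormedSpace.exp) D
        (Matrix.diagonal l + (0:ℝ) • Matrix.single p q (1:ℝ)) := by simpa using hD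
    have h1 : HasDerivAt (fun t : ℝ =>
        NormedSpace.exp (Matrix.diagonal l + t • Matrix.single p q (1:ℝ)))
        (D (Matrix.single p q 1)) 0 := hD'.comp_hasDerivAt 0 hline
    exact h1.unique (FrechetExpAux.hasDerivAt_exp_line l p q)
  intro E i j
  have hE : D E = ∑ p : Fin n, ∑ q : Fin n,
      (E p q * divDiff Real.exp Real.exp (l p) (l q)) • Matrix.single p q (1:ℝ) := by
    conv_lhs => rw [matrix_eq_sum_single E]
    rw [map_sum]
    refine Finset.sum_congr rfl fun p _ => ?_
    rw [map_sum]
    refine Finset.sum_congr rfl fun q _ => ?_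
    have h2 : Matrix.single p q (E p q) = E p q • Matrix.single p q (1:ℝ) := by
      rw [Matrix.smul_single, smul_eq_mul, mul_one]
    rw [h2, _root_.map_smul, hbasis p q, smul_smul]
  rw [hE]
  simp [Matrix.sum_apply, Matrix.single, ite_and, mul_comm]
end

section
/- Fix α ∈ ℝ, α ≠ 0, an integer n ≥ 1, and positive reals λ_1,…,λ_n; write Λ = diag(λ_1,…,λ_n). Define matrices F, G ∈ M(n,ℝ) by F_{ij} = exp^{[1]}(log λ_i, log λ_j) and G_{ij} = log^{[1]}(λ_i^{2α}, λ_j^{2α}), where f^{[1]} denotes the first divided difference. Let Ỹ ∈ Sym(n) and define H̃ ∈ Sym(n) entrywise by H̃_{ij} = c^{(α)}_{ij} Ỹ_{ij}, where c^{(α)}_{ij} = 1/(2λ_i) if λ_i = λ_j (in particular on the diagonal), and c^{(α)}_{ij} = (λ_i^{2α} − λ_j^{2α}) / (2α (λ_i − λ_j)(λ_i^{2α} + λ_j^{2α})) if λ_i ≠ λ_j. Then H̃ is the unique symmetric matrix satisfying F ⊙ (G ⊙ (H̃ Λ^{2α} + Λ^{2α} H̃)) = Ỹ, where ⊙ denotes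 the Hadamard (entrywise) product. -/
/-!
STATEMENT 2: Entrywise closed form of the Alpha-Procrustes operator `L_{P,α}`
(α ≠ 0) in the eigenbasis: `H̃_{ij} = c^{(α)}_{ij} Ỹ_{ij}` is the unique
symmetric solution of `F ⊙ (G ⊙ (H̃ Λ^{2α} + Λ^{2α} H̃)) = Ỹ`.
-/

open Matrix
open scoped Matrix

theorem alphaProcrustes_operator_entrywise
    (α : ℝ) (hα : α ≠ 0) (n : ℕ) (hn : 1 ≤ n)
    (l : Fin n → ℝ) (hl : ∀ i, 0 < l i)
    (F G : Matrix (Fin n) (Fin n) ℝ)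
    (hF : ∀ i j, F i j = divDiff Real.exp Real.exp (Real.log (l i)) (Real.log (l j)))
    (hG : ∀ i j, G i j = divDiff Real.log (fun x => x⁻¹) (l i ^ (2 * α)) (l j ^ (2 * α)))
    (Ytilde : Matrix (Fin n) (Fin n) ℝ) (hY : Ytildeᵀ = Ytilde)
    (c : Fin n → Fin n → ℝ)
    (hc : ∀ i j, c i j =
      if l i = l j then 1 / (2 * l i)
      else (l i ^ (2 * α) - l j ^ (2 * α)) /
        (2 * α * (l i - l j) * (l i ^ (2 * α) + l j ^ (2 * α))))
    (Htilde : Matrix (Fin n) (Fin n) ℝ)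
    (hH : ∀ i j, Htilde i j = c i j * Ytilde i j)
    (Λ2α : Matrix (Fin n) (Fin n) ℝ)
    (hΛ : Λ2α = Matrix.diagonal (fun i => l i ^ (2 * α))) :
    Htildeᵀ = Htilde ∧
    F ⊙ (G ⊙ (Htilde * Λ2α + Λ2α * Htilde)) = Ytilde ∧
    ∀ H' : Matrix (Fin n) (Fin n) ℝ, H'ᵀ = H' →
      F ⊙ (G ⊙ (H' * Λ2α + Λ2α * H')) = Ytilde → H' = Htilde := by

  have hrpos : ∀ i : Fin n, (0:ℝ) < l i ^ (2 * α) := fun i => Real.rpow_pos_of_pos (hl i) _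
  -- key scalar identity
  have hkey : ∀ i j, F i j * G i j * (l i ^ (2 * α) + l j ^ (2 * α)) * c i j = 1 := by
    intro i j
    rw [hF, hG, hc]
    by_cases h : l i = l j
    · have hlog : Real.log (l i) = Real.log (l j) := by rw [h]
      have hr : l i ^ (2 * α) = l j ^ (2 * α) := by rw [h]
      simp only [divDiff, hlog, hr, if_pos rfl, if_pos h]
      rw [← hlog, ← hr, Real.exp_log (hl i)]
      have h1 : l i ≠ 0 := (hl i).ne'
      have h2 : l i ^ (2 * α) ≠ 0 := (hrpos i).ne'
      field_simp
      rw [if_pos trivial, if_pos trivial]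
      field_simp
      norm_num
    · have hlog : Real.log (l i) ≠ Real.log (l j) := fun hh => h <|
        Real.log_injOn_pos (Set.mem_Ioi.mpr (hl i)) (Set.mem_Ioi.mpr (hl j)) hh
      have hr : l i ^ (2 * α) ≠ l j ^ (2 * α) := by
        intro hh
        apply hlog
        have := congrArg Real.log hh
        rw [Real.log_rpow (hl i), Real.log_rpow (hl j)] at this
        exact mul_left_cancel₀ (mul_ne_zero two_ne_zero hα) this
      simp only [divDiff, if_neg hlog, if_neg hr, if_neg h]
      rw [Real.exp_log (hl i), Real.exp_log (hl j), Real.log_rpow (hl i),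
        Real.log_rpow (hl j)]
      have h1 : Real.log (l i) - Real.log (l j) ≠ 0 := sub_ne_zero.mpr hlog
      have h2 : l i ^ (2 * α) - l j ^ (2 * α) ≠ 0 := sub_ne_zero.mpr hr
      have h3 : l i - l j ≠ 0 := sub_ne_zero.mpr h
      have h4 : l i ^ (2 * α) + l j ^ (2 * α) ≠ 0 := (add_pos (hrpos i) (hrpos j)).ne'
      field_simp
  have hcne : ∀ i j, c i j ≠ 0 := by
    intro i j hc0
    have := hkey i j
    rw [hc0, mul_zero] at this
    exact one_ne_zero this.symm
  have hcsymm : ∀ i j, c j i = c i j := by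
    intro i j
    rw [hc, hc]
    by_cases h : l i = l j
    · rw [if_pos h, if_pos h.symm, h]
    · rw [if_neg h, if_neg (fun hh => h hh.symm)]
      have h3 : l i - l j ≠ 0 := sub_ne_zero.mpr h
      have h3' : l j - l i ≠ 0 := sub_ne_zero.mpr (fun hh => h hh.symm)
      have h4 : l i ^ (2 * α) + l j ^ (2 * α) ≠ 0 := (add_pos (hrpos i) (hrpos j)).ne'
      have h4' : l j ^ (2 * α) + l i ^ (2 * α) ≠ 0 := (add_pos (hrpos j) (hrpos i)).ne'
      field_simp
      ring
  -- entry computation of the LHS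
  have hentry : ∀ (H : Matrix (Fin n) (Fin n) ℝ) i j,
      (F ⊙ (G ⊙ (H * Λ2α + Λ2α * H))) i j =
        F i j * G i j * (l i ^ (2 * α) + l j ^ (2 * α)) * H i j := by
    intro H i j
    simp [Matrix.hadamard, hΛ, Matrix.mul_diagonal, Matrix.diagonal_mul]
    ring
  refine ⟨?_, ?_, ?_⟩
  · ext i j
    have hYs : Ytilde j i = Ytilde i j := congrFun (congrFun hY i) j
    simp only [Matrix.transpose_apply, hH]
    rw [hcsymm j i, hYs]
  · ext i j
    rw [hentry, hH, ← mul_assoc, hkey, one_mul]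
  · intro H' _ hEq
    ext i j
    have h1 : F i j * G i j * (l i ^ (2 * α) + l j ^ (2 * α)) * H' i j = Ytilde i j := by
      rw [← hentry, hEq]
    rw [hH, ← h1]
    linear_combination (-(H' i j)) * hkey i j
end

section
/- Fix α ∈ ℝ, α ≠ 0, an integer n ≥ 1, positive reals λ_1,…,λ_n, and an orthogonal matrix Q ∈ M(n,ℝ). Let P = Q Λ Qᵀ with Λ = diag(λ_1,…,λ_n). For any Y, Z ∈ Sym(n), set Ỹ = Qᵀ Y Q, Z̃ = Qᵀ Z Q, and define H_Y = Q (C ⊙ Ỹ) Qᵀ and H_Z = Q (C ⊙ Z̃) Qᵀ, where C ∈ M(n,ℝ) has entries C_{ij} = c^{(α)}_{ij} given by c^{(α)}_{ij} = 1/(2λ_i) if λ_i = λ_j, and c^{(α)}_{ij} = (λ_i^{2α} − λ_j^{2α})/(2α(λ_i − λ_j)(λ_i^{2α} + λ_j^{2α})) if λ_i ≠ λ_j. Then 4 · tr(H_Y P^{2α} H_Z) = Σ_{i=1}^n w^{(α)}_{ii} Ỹ_{ii} Z̃_{ii} + Σ_{1≤i<j≤n} w^{(α)}_{ij} Ỹ_{ij}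 Z̃_{ij}, where w^{(α)}_{ii} = λ_i^{2α−2}, w^{(α)}_{ij} = (λ_i^{2α} − λ_j^{2α})² / (α² (λ_i − λ_j)² (λ_i^{2α} + λ_j^{2α})) when λ_i ≠ λ_j, and w^{(α)}_{ij} = 2 λ_i^{2α−2} when λ_i = λ_j with i ≠ j. -/
/-!
STATEMENT 5: Spectral weights of the Alpha-Procrustes metric (α ≠ 0):
`4 tr(H_Y P^{2α} H_Z) = Σ_i w_ii Ỹ_ii Z̃_ii + Σ_{i<j} w_ij Ỹ_ij Z̃_ij`.
-/

open Matrix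
open scoped Matrix

open Finset in
lemma sum_split {ι : Type*} [Fintype ι] [LinearOrder ι] (g : ι → ι → ℝ) :
    ∑ i, ∑ j, g i j = (∑ i, g i i)
      + ∑ p ∈ Finset.univ.filter (fun p : ι × ι => p.1 < p.2), (g p.1 p.2 + g p.2 p.1) := by
  have h0 : ∑ i, ∑ j, g i j = ∑ p : ι × ι, g p.1 p.2 := by
    rw [← Finset.sum_product']
    rfl
  have h1 := Finset.sum_filter_add_sum_filter_not Finset.univ
    (fun p : ι × ι => p.1 = p.2) (fun p => g p.1 p.2)
  have h2 := Finset.sum_filter_add_sum_filter_not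
    (Finset.univ.filter (fun p : ι × ι => ¬ p.1 = p.2))
    (fun p : ι × ι => p.1 < p.2) (fun p => g p.1 p.2)
  have hdiag : ∑ p ∈ Finset.univ.filter (fun p : ι × ι => p.1 = p.2), g p.1 p.2
      = ∑ i, g i i := by
    rw [show Finset.univ.filter (fun p : ι × ι => p.1 = p.2)
        = Finset.univ.image (fun i => (i, i)) from by
      ext ⟨a, b⟩; simp [Prod.ext_iff, eq_comm]]
    rw [Finset.sum_image (by intro a _ b _ h; exact (Prod.mk.injEq _ _ _ _ ▸ h :  _ = _ ∧ _).1)]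
  have hlt : (Finset.univ.filter (fun p : ι × ι => ¬ p.1 = p.2)).filter
      (fun p : ι × ι => p.1 < p.2) = Finset.univ.filter (fun p : ι × ι => p.1 < p.2) := by
    ext p; simp only [Finset.mem_filter, Finset.mem_univ, true_and]
    exact ⟨fun h => h.2, fun h => ⟨ne_of_lt h, h⟩⟩
  have hgt : (Finset.univ.filter (fun p : ι × ι => ¬ p.1 = p.2)).filter
      (fun p : ι × ι => ¬ p.1 < p.2) = Finset.univ.filter (fun p : ι × ι => p.2 < p.1) := by
    ext p; simp only [Finset.mem_filter, Finset.mem_univ, true_and, not_lt]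
    constructor
    · rintro ⟨h1, h2⟩; exact lt_of_le_of_ne h2 (fun h => h1 h.symm)
    · intro h; exact ⟨fun h' => absurd h' (ne_of_gt h), le_of_lt h⟩
  have hswap : ∑ p ∈ Finset.univ.filter (fun p : ι × ι => p.2 < p.1), g p.1 p.2
      = ∑ p ∈ Finset.univ.filter (fun p : ι × ι => p.1 < p.2), g p.2 p.1 := by
    rw [show Finset.univ.filter (fun p : ι × ι => p.2 < p.1)
        = (Finset.univ.filter (fun p : ι × ι => p.1 < p.2)).image Prod.swap from by
      ext ⟨a, b⟩; simp [Prod.ext_iff]]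
    rw [Finset.sum_image (by intro a _ b _ h; simpa using congrArg Prod.swap h)]
    rfl
  rw [h0, ← h1, hdiag, ← h2, hlt, hgt, hswap, Finset.sum_add_distrib]



theorem alphaProcrustes_metric_weights
    (α : ℝ) (hα : α ≠ 0) (n : ℕ) (hn : 1 ≤ n)
    (l : Fin n → ℝ) (hl : ∀ i, 0 < l i)
    (Q : Matrix (Fin n) (Fin n) ℝ) (hQ : Qᵀ * Q = 1)
    (P2α : Matrix (Fin n) (Fin n) ℝ)
    (hP : P2α = Q * Matrix.diagonal (fun i => l i ^ (2 * α)) * Qᵀ)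
    (C : Matrix (Fin n) (Fin n) ℝ)
    (hC : ∀ i j, C i j =
      if l i = l j then 1 / (2 * l i)
      else (l i ^ (2 * α) - l j ^ (2 * α)) /
        (2 * α * (l i - l j) * (l i ^ (2 * α) + l j ^ (2 * α))))
    (Y Z : Matrix (Fin n) (Fin n) ℝ) (hY : Yᵀ = Y) (hZ : Zᵀ = Z)
    (Ytilde Ztilde HY HZ : Matrix (Fin n) (Fin n) ℝ)
    (hYt : Ytilde = Qᵀ * Y * Q) (hZt : Ztilde = Qᵀ * Z * Q)
    (hHY : HY = Q * (C ⊙ Ytilde) * Qᵀ) (hHZ : HZ = Q * (C ⊙ Ztilde) * Qᵀ)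
    (w : Fin n → Fin n → ℝ)
    (hwdiag : ∀ i, w i i = l i ^ (2 * α - 2))
    (hwoff : ∀ i j, i ≠ j → w i j =
      if l i = l j then 2 * l i ^ (2 * α - 2)
      else (l i ^ (2 * α) - l j ^ (2 * α)) ^ 2 /
        (α ^ 2 * (l i - l j) ^ 2 * (l i ^ (2 * α) + l j ^ (2 * α)))) :
    4 * (HY * P2α * HZ).trace
      = (∑ i, w i i * Ytilde i i * Ztilde i i)
        + ∑ p ∈ Finset.univ.filter (fun p : Fin n × Fin n => p.1 < p.2),
            w p.1 p.2 * Ytilde p.1 p.2 * Ztilde p.1 p.2 := by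
  -- basic positivity facts
  have hd : ∀ i, (0:ℝ) < l i ^ (2 * α) := fun i => Real.rpow_pos_of_pos (hl i) _
  have hds : ∀ i j, (0:ℝ) < l i ^ (2 * α) + l j ^ (2 * α) :=
    fun i j => add_pos (hd i) (hd j)
  -- symmetry of C
  have hCsymm : ∀ i j, C j i = C i j := by
    intro i j
    rw [hC, hC]
    by_cases h : l i = l j
    · rw [if_pos h.symm, if_pos h, h]
    · rw [if_neg h, if_neg (Ne.symm h)]
      rw [div_eq_div_iff]
      · ring
      · exact mul_ne_zero (mul_ne_zero (by positivity) (sub_ne_zero.mpr (Ne.symm h)))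
          (ne_of_gt (hds j i))
      · exact mul_ne_zero (mul_ne_zero (by positivity) (sub_ne_zero.mpr h))
          (ne_of_gt (hds i j))
  -- symmetry of Ytilde, Ztilde
  have hYs : ∀ i j, Ytilde j i = Ytilde i j := by
    intro i j
    have : Ytildeᵀ = Ytilde := by
      rw [hYt, Matrix.transpose_mul, Matrix.transpose_mul, Matrix.transpose_transpose, hY,
        Matrix.mul_assoc]
    conv_lhs => rw [← this]
    rfl
  have hZs : ∀ i j, Ztilde j i = Ztilde i j := by
    intro i j
    have : Ztildeᵀ = Ztilde := by
      rw [hZt, Matrix.transpose_mul, Matrix.transpose_mul, Matrix.transpose_transpose, hZ,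
        Matrix.mul_assoc]
    conv_lhs => rw [← this]
    rfl
  -- reduce the trace
  have e1 : ∀ M N : Matrix (Fin n) (Fin n) ℝ,
      (Q * M * Qᵀ) * (Q * N * Qᵀ) = Q * (M * N) * Qᵀ := by
    intro M N
    simp only [Matrix.mul_assoc]
    rw [← Matrix.mul_assoc Qᵀ Q, hQ, Matrix.one_mul]
  have key : HY * P2α * HZ
      = Q * ((C ⊙ Ytilde) * Matrix.diagonal (fun i => l i ^ (2 * α)) * (C ⊙ Ztilde)) * Qᵀ := by
    rw [hHY, hP, hHZ, e1, e1]
  have hentry : ∀ i : Fin n,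
      ((C ⊙ Ytilde) * Matrix.diagonal (fun i => l i ^ (2 * α)) * (C ⊙ Ztilde)) i i
        = ∑ j, (C i j * Ytilde i j * l j ^ (2 * α)) * (C j i * Ztilde j i) := by
    intro i
    rw [Matrix.mul_apply]
    exact Finset.sum_congr rfl fun j _ => by
      rw [Matrix.mul_diagonal, Matrix.hadamard_apply, Matrix.hadamard_apply]
  have htr : (HY * P2α * HZ).trace
      = ∑ i, ∑ j, (C i j * Ytilde i j * l j ^ (2 * α)) * (C j i * Ztilde j i) := by
    rw [key, Matrix.trace_mul_cycle, ← Matrix.mul_assoc, hQ, Matrix.one_mul]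
    simp only [Matrix.trace, Matrix.diag]
    exact Finset.sum_congr rfl fun i _ => hentry i
  rw [htr, Finset.mul_sum]
  simp only [Finset.mul_sum]
  rw [sum_split (fun i j => 4 * ((C i j * Ytilde i j * l j ^ (2 * α)) * (C j i * Ztilde j i)))]
  congr 1
  · -- diagonal terms
    refine Finset.sum_congr rfl fun i _ => ?_
    rw [hwdiag, hC]
    simp only [if_pos rfl, ↓reduceIte]
    have hpow : l i ^ (2 * α - 2) = l i ^ (2 * α) / (l i * l i) := by
      rw [Real.rpow_sub (hl i)]
      congr 1
      rw [show (2:ℝ) = ((2:ℕ):ℝ) by norm_num, Real.rpow_natCast]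
      ring
    rw [hpow]
    field_simp
    ring
  · -- off-diagonal terms
    refine Finset.sum_congr rfl fun p hp => ?_
    have hlt : p.1 < p.2 := (Finset.mem_filter.mp hp).2
    have hne : p.1 ≠ p.2 := ne_of_lt hlt
    set i := p.1
    set j := p.2
    rw [hwoff i j hne, hCsymm i j, hC i j, hYs i j, hZs i j]
    by_cases h : l i = l j
    · rw [if_pos h, if_pos h]
      have hpow : l i ^ (2 * α - 2) = l i ^ (2 * α) / (l i * l i) := by
        rw [Real.rpow_sub (hl i)]
        congr 1
        rw [show (2:ℝ) = ((2:ℕ):ℝ) by norm_num, Real.rpow_natCast]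
        ring
      rw [hpow, ← h]
      have ht : l i ≠ 0 := ne_of_gt (hl i)
      set a := l i ^ (2 * α) with ha
      set t := l i with hti
      field_simp
      ring
    · rw [if_neg h, if_neg h]
      have h1 : l i - l j ≠ 0 := sub_ne_zero.mpr h
      have h2 : l i ^ (2 * α) + l j ^ (2 * α) ≠ 0 := ne_of_gt (hds i j)
      set a := l i ^ (2 * α) with ha
      set b := l j ^ (2 * α) with hb
      set u := l i with hu
      set v := l j with hv
      field_simp
      ring
end

section
/- Let n ≥ 1, let λ_1,…,λ_n > 0, and let I = {(i,j) : 1 ≤ i ≤ j ≤ n}. Define the diagonal matrix W over the index set I by W_{(i,i),(i,i)} = 1 for 1 ≤ i ≤ n and W_{(i,j),(i,j)} = (1/2)(λ_i + λ_j)²/(λ_i² + λ_j²) for 1 ≤ i < j ≤ n. Let H be a real symmetric positive definite I×I matrix all of whose eigenvalues lie in [μ, L] for some constants 0 < μ ≤ L. Then all eigenvalues of the symmetric matrix W^{−1/2} H W^{−1/2} (equivalently, all eigenvalues of W^{−1} H, which are real) lie in the interval [μ, 2L]. In particular, the bounds μ and 2L are independent of λ_1,…,λ_n. -/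
/-!
STATEMENT 10: Uniform spectral bounds for the α = 1 Alpha-Procrustes
Riemannian Hessian: if all eigenvalues of `H` lie in `[μ, L]`, then all
eigenvalues of `W^{-1/2} H W^{-1/2}` lie in `[μ, 2L]`, independently of the
`λ_i`.
-/

open Matrix

lemma shift_posSemidef {m : Type*} [Fintype m] [DecidableEq m]
    {A : Matrix m m ℝ} (hA : A.IsHermitian) {a : ℝ}
    (h : ∀ i, a ≤ hA.eigenvalues i) :
    (A - a • (1 : Matrix m m ℝ)).PosSemidef := by
  classical
  set U : Matrix m m ℝ := (hA.eigenvectorUnitary : Matrix m m ℝ) with hU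
  have hUU : U * star U = 1 := (Matrix.mem_unitaryGroup_iff).mp hA.eigenvectorUnitary.2
  have key : A - a • (1 : Matrix m m ℝ)
      = U * Matrix.diagonal (fun i => hA.eigenvalues i - a) * star U := by
    have hd : Matrix.diagonal (fun i => hA.eigenvalues i - a)
        = Matrix.diagonal (RCLike.ofReal ∘ hA.eigenvalues) - a • 1 := by
      rw [smul_one_eq_diagonal, ← diagonal_sub]; rfl
    rw [hd, Matrix.mul_sub, Matrix.sub_mul, ← (by exact hA.spectral_theorem : A = U * Matrix.diagonal (RCLike.ofReal ∘ hA.eigenvalues) * star U),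
      Matrix.mul_smul, mul_one, Matrix.smul_mul, hUU]
  rw [key]
  exact (Matrix.posSemidef_diagonal_iff.mpr
    (fun i => by simpa using h i)).mul_mul_conjTranspose_same U

lemma shift_posSemidef' {m : Type*} [Fintype m] [DecidableEq m]
    {A : Matrix m m ℝ} (hA : A.IsHermitian) {b : ℝ}
    (h : ∀ i, hA.eigenvalues i ≤ b) :
    (b • (1 : Matrix m m ℝ) - A).PosSemidef := by
  classical
  set U : Matrix m m ℝ := (hA.eigenvectorUnitary : Matrix m m ℝ) with hU
  have hUU : U * star U = 1 := (Matrix.mem_unitaryGroup_iff).mp hA.eigenvectorUnitary.2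
  have key : b • (1 : Matrix m m ℝ) - A
      = U * Matrix.diagonal (fun i => b - hA.eigenvalues i) * star U := by
    have hd : Matrix.diagonal (fun i => b - hA.eigenvalues i)
        = b • 1 - Matrix.diagonal (RCLike.ofReal ∘ hA.eigenvalues) := by
      rw [smul_one_eq_diagonal, ← diagonal_sub]; rfl
    rw [hd, Matrix.mul_sub, Matrix.sub_mul, ← (by exact hA.spectral_theorem : A = U * Matrix.diagonal (RCLike.ofReal ∘ hA.eigenvalues) * star U),
      Matrix.mul_smul, mul_one, Matrix.smul_mul, hUU]
  rw [key]
  exact (Matrix.posSemidef_diagonal_iff.mpr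
    (fun i => by simpa using h i)).mul_mul_conjTranspose_same U

lemma quad_bounds_aux {m : Type*} [Fintype m] [DecidableEq m]
    {A : Matrix m m ℝ} (hA : A.IsHermitian) {a b : ℝ}
    (h : ∀ i, hA.eigenvalues i ∈ Set.Icc a b) (x : m → ℝ) :
    a * (x ⬝ᵥ x) ≤ x ⬝ᵥ (A *ᵥ x) ∧ x ⬝ᵥ (A *ᵥ x) ≤ b * (x ⬝ᵥ x) := by
  classical
  have h1 := (shift_posSemidef hA (fun i => (h i).1)).dotProduct_mulVec_nonneg x
  have h2 := (shift_posSemidef' hA (fun i => (h i).2)).dotProduct_mulVec_nonneg x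
  simp only [star_trivial, Matrix.sub_mulVec, Matrix.smul_mulVec, Matrix.one_mulVec,
    dotProduct_sub, dotProduct_smul, smul_eq_mul] at h1 h2
  constructor <;> linarith


theorem alpha_one_uniform_hessian_bounds
    (n : ℕ) (hn : 1 ≤ n) (l : Fin n → ℝ) (hl : ∀ i, 0 < l i)
    (μ L : ℝ) (hμ : 0 < μ) (hμL : μ ≤ L)
    (W : Matrix {p : Fin n × Fin n // p.1 ≤ p.2} {p : Fin n × Fin n // p.1 ≤ p.2} ℝ)
    (hW : W = Matrix.diagonal (fun p : {p : Fin n × Fin n // p.1 ≤ p.2} =>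
      if p.val.1 = p.val.2 then 1
      else (1 / 2) * ((l p.val.1 + l p.val.2) ^ 2 / ((l p.val.1) ^ 2 + (l p.val.2) ^ 2))))
    (H : Matrix {p : Fin n × Fin n // p.1 ≤ p.2} {p : Fin n × Fin n // p.1 ≤ p.2} ℝ)
    (hH : H.PosDef)
    (heig : ∀ k, hH.isHermitian.eigenvalues k ∈ Set.Icc μ L)
    (Winvhalf : Matrix {p : Fin n × Fin n // p.1 ≤ p.2} {p : Fin n × Fin n // p.1 ≤ p.2} ℝ)
    (hWih : Winvhalf = Matrix.diagonal
      (fun p : {p : Fin n × Fin n // p.1 ≤ p.2} => (Real.sqrt (W p p))⁻¹))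
    (B : Matrix {p : Fin n × Fin n // p.1 ≤ p.2} {p : Fin n × Fin n // p.1 ≤ p.2} ℝ)
    (hBdef : B = Winvhalf * H * Winvhalf) (hB : B.IsHermitian) :
    ∀ k, hB.eigenvalues k ∈ Set.Icc μ (2 * L) := by
  intro k
  classical
  obtain ⟨v, hBv, hvv⟩ : ∃ v : {p : Fin n × Fin n // p.1 ≤ p.2} → ℝ,
      B *ᵥ v = hB.eigenvalues k • v ∧ v ⬝ᵥ v = 1 := by
    refine ⟨_, hB.mulVec_eigenvectorBasis k, ?_⟩
    have hnorm := hB.eigenvectorBasis.orthonormal.1 k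
    rw [EuclideanSpace.norm_eq] at hnorm
    have h2 : ∑ i, ‖hB.eigenvectorBasis k i‖ ^ 2 = 1 := by
      rw [← Real.sqrt_eq_one]; exact hnorm
    simpa [dotProduct, Real.norm_eq_abs, sq_abs, pow_two] using h2
  set t := hB.eigenvalues k with ht
  -- the diagonal entries of W are in [1/2, 1]
  have hWpp : ∀ p, 1/2 ≤ W p p ∧ W p p ≤ 1 := by
    intro p
    rw [hW, Matrix.diagonal_apply_eq]
    by_cases hpe : p.val.1 = p.val.2
    · simp [hpe]; norm_num
    · simp only [hpe, if_false]
      have ha := hl p.val.1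
      have hb := hl p.val.2
      have hden : (0:ℝ) < l p.val.1 ^ 2 + l p.val.2 ^ 2 := by positivity
      constructor
      · have h1 : (1:ℝ) ≤ (l p.val.1 + l p.val.2) ^ 2 / (l p.val.1 ^ 2 + l p.val.2 ^ 2) :=
          (one_le_div hden).mpr (by nlinarith)
        linarith
      · have h2 : (l p.val.1 + l p.val.2) ^ 2 / (l p.val.1 ^ 2 + l p.val.2 ^ 2) ≤ 2 :=
          (div_le_iff₀ hden).mpr (by nlinarith [sq_nonneg (l p.val.1 - l p.val.2)])
        linarith
  set d : {p : Fin n × Fin n // p.1 ≤ p.2} → ℝ := fun p => (Real.sqrt (W p p))⁻¹ with hd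
  have hd2 : ∀ p, 1 ≤ d p ^ 2 ∧ d p ^ 2 ≤ 2 := by
    intro p
    obtain ⟨hw1, hw2⟩ := hWpp p
    have hwpos : 0 < W p p := by linarith
    have : d p ^ 2 = (W p p)⁻¹ := by
      have hdp : d p = (Real.sqrt (W p p))⁻¹ := rfl
      rw [hdp, ← Real.sqrt_inv, Real.sq_sqrt (by positivity)]
    rw [this]
    constructor
    · rw [one_le_inv_iff₀]; exact ⟨hwpos, hw2⟩
    · rw [inv_le_comm₀ (by positivity) (by norm_num)]; linarith
  set y : {p : Fin n × Fin n // p.1 ≤ p.2} → ℝ := fun p => d p * v p with hy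
  have hyv : Winvhalf *ᵥ v = y := by
    ext p
    rw [hWih]
    exact mulVec_diagonal _ _ _
  -- t equals the H-quadratic form of y
  have hteq : t = y ⬝ᵥ (H *ᵥ y) := by
    have h0 : v ⬝ᵥ (B *ᵥ v) = t := by
      rw [hBv, dotProduct_smul, smul_eq_mul, hvv, mul_one]
    rw [← h0, hBdef, ← Matrix.mulVec_mulVec, ← Matrix.mulVec_mulVec, hyv,
      dotProduct_mulVec]
    congr 1
    ext p
    rw [hWih, vecMul_diagonal]
    exact mul_comm _ _
  -- bounds on y ⬝ᵥ y
  have hyy1 : (1:ℝ) ≤ y ⬝ᵥ y := by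
    rw [← hvv]
    simp only [dotProduct, hy]
    apply Finset.sum_le_sum
    intro p _
    have h1 := (hd2 p).1
    nlinarith [sq_nonneg (v p)]
  have hyy2 : y ⬝ᵥ y ≤ 2 := by
    have : y ⬝ᵥ y ≤ 2 * (v ⬝ᵥ v) := by
      simp only [dotProduct, hy, Finset.mul_sum]
      apply Finset.sum_le_sum
      intro p _
      have h2 := (hd2 p).2
      nlinarith [sq_nonneg (v p)]
    rw [hvv] at this
    linarith
  obtain ⟨hq1, hq2⟩ := quad_bounds_aux hH.isHermitian heig y
  constructor
  · rw [hteq] at *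
    nlinarith
  · rw [hteq] at *
    nlinarith
end

section
/- Fix α ∈ ℝ, α ≠ 0. Let n ≥ 1, let λ_1,…,λ_n > 0, and let I = {(i,j) : 1 ≤ i ≤ j ≤ n}. Define the diagonal matrix W_α over I by W_α at index (i,i) equal to λ_i^{2α−2}, and at index (i,j) with i < j equal to (1/2) w^{(α)}_{ij}, where w^{(α)}_{ij} = (λ_i^{2α} − λ_j^{2α})²/(α²(λ_i − λ_j)²(λ_i^{2α} + λ_j^{2α})) if λ_i ≠ λ_j and w^{(α)}_{ij} = 2λ_i^{2α−2} if λ_i = λ_j. Let H be a real symmetric positive definite I×I matrix with all eigenvalues in [μ, L], 0 < μ ≤ L. Then λ_max(W_α^{−1/2} H W_α^{−1/2}) ≥ μ · (min_{1≤i≤n} λ_i^{2α−2})^{−1} and λ_min(W_α^{−1/2} H W_α^{−1/2}) ≤ L · (max_{1≤i≤n} λ_i^{2α−2})^{−1}. -/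
/-!
STATEMENT 11: For α ≠ 0, the extreme eigenvalues of
`W_α^{-1/2} H W_α^{-1/2}` satisfy
`λ_max ≥ μ · (min_i λ_i^{2α-2})⁻¹` and `λ_min ≤ L · (max_i λ_i^{2α-2})⁻¹`.
-/

open Matrix

lemma diag_mem_bounds {m : Type*} [Fintype m] [DecidableEq m] {A : Matrix m m ℝ}
    (hA : A.IsHermitian) (a b : ℝ) (ha : ∀ k, a ≤ hA.eigenvalues k)
    (hb : ∀ k, hA.eigenvalues k ≤ b) (p : m) : a ≤ A p p ∧ A p p ≤ b := by
  set U : Matrix m m ℝ := (hA.eigenvectorUnitary : Matrix m m ℝ) with hU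
  have hsum : ∑ k, (U p k)^2 = 1 := by
    have h1 : (U * star U) p p = 1 := by
      rw [Matrix.mem_unitaryGroup_iff.mp hA.eigenvectorUnitary.2]
      simp
    simpa [Matrix.mul_apply, Matrix.star_apply, sq] using h1
  have key : A p p = ∑ k, hA.eigenvalues k * (U p k)^2 := by
    conv_lhs => rw [hA.spectral_theorem]
    simp [Matrix.mul_apply, Matrix.diagonal, Matrix.star_apply, sq]
    ring_nf
    congr 1
    ext k
    exact mul_comm _ _
  constructor
  · rw [key]
    calc a = ∑ k, a * (U p k)^2 := by rw [← Finset.mul_sum, hsum, mul_one]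
    _ ≤ ∑ k, hA.eigenvalues k * (U p k)^2 :=
      Finset.sum_le_sum fun k _ => mul_le_mul_of_nonneg_right (ha k) (sq_nonneg _)
  · rw [key]
    calc ∑ k, hA.eigenvalues k * (U p k)^2 ≤ ∑ k, b * (U p k)^2 :=
      Finset.sum_le_sum fun k _ => mul_le_mul_of_nonneg_right (hb k) (sq_nonneg _)
    _ = b := by rw [← Finset.mul_sum, hsum, mul_one]


theorem alpha_metric_hessian_spectral_distortion
    (α : ℝ) (hα : α ≠ 0) (n : ℕ) (hn : 1 ≤ n)
    (l : Fin n → ℝ) (hl : ∀ i, 0 < l i)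
    (μ L : ℝ) (hμ : 0 < μ) (hμL : μ ≤ L)
    (w : Fin n → Fin n → ℝ)
    (hwoff : ∀ i j, w i j =
      if l i = l j then 2 * l i ^ (2 * α - 2)
      else (l i ^ (2 * α) - l j ^ (2 * α)) ^ 2 /
        (α ^ 2 * (l i - l j) ^ 2 * (l i ^ (2 * α) + l j ^ (2 * α))))
    (Wα : Matrix {p : Fin n × Fin n // p.1 ≤ p.2} {p : Fin n × Fin n // p.1 ≤ p.2} ℝ)
    (hW : Wα = Matrix.diagonal (fun p : {p : Fin n × Fin n // p.1 ≤ p.2} =>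
      if p.val.1 = p.val.2 then l p.val.1 ^ (2 * α - 2)
      else (1 / 2) * w p.val.1 p.val.2))
    (H : Matrix {p : Fin n × Fin n // p.1 ≤ p.2} {p : Fin n × Fin n // p.1 ≤ p.2} ℝ)
    (hH : H.PosDef)
    (heig : ∀ k, hH.isHermitian.eigenvalues k ∈ Set.Icc μ L)
    (Winvhalf : Matrix {p : Fin n × Fin n // p.1 ≤ p.2} {p : Fin n × Fin n // p.1 ≤ p.2} ℝ)
    (hWih : Winvhalf = Matrix.diagonal
      (fun p : {p : Fin n × Fin n // p.1 ≤ p.2} => (Real.sqrt (Wα p p))⁻¹))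
    (B : Matrix {p : Fin n × Fin n // p.1 ≤ p.2} {p : Fin n × Fin n // p.1 ≤ p.2} ℝ)
    (hBdef : B = Winvhalf * H * Winvhalf) (hB : B.IsHermitian) :
    μ * (⨅ i, l i ^ (2 * α - 2))⁻¹ ≤ ⨆ k, hB.eigenvalues k ∧
    (⨅ k, hB.eigenvalues k) ≤ L * (⨆ i, l i ^ (2 * α - 2))⁻¹ := by
  haveI hne : Nonempty {p : Fin n × Fin n // p.1 ≤ p.2} :=
    ⟨⟨(⟨0, hn⟩, ⟨0, hn⟩), le_rfl⟩⟩
  set f : Fin n → ℝ := fun i => l i ^ (2 * α - 2) with hf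
  have hfpos : ∀ i, 0 < f i := fun i => Real.rpow_pos_of_pos (hl i) _
  haveI : Nonempty (Fin n) := ⟨⟨0, hn⟩⟩
  obtain ⟨i₀, hi₀⟩ := Finite.exists_min f
  obtain ⟨i₁, hi₁⟩ := Finite.exists_max f
  have hinf : (⨅ i, f i) = f i₀ :=
    le_antisymm (ciInf_le (Finite.bddBelow_range f) i₀) (le_ciInf hi₀)
  have hsup : (⨆ i, f i) = f i₁ :=
    le_antisymm (ciSup_le hi₁) (le_ciSup (Finite.bddAbove_range f) i₁)
  have hHd : ∀ p, μ ≤ H p p ∧ H p p ≤ L := fun p =>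
    diag_mem_bounds hH.isHermitian μ L (fun k => (heig k).1) (fun k => (heig k).2) p
  have hBd : ∀ p, (⨅ k, hB.eigenvalues k) ≤ B p p ∧ B p p ≤ ⨆ k, hB.eigenvalues k := fun p =>
    diag_mem_bounds hB _ _ (fun k => ciInf_le (Finite.bddBelow_range _) k)
      (fun k => le_ciSup (Finite.bddAbove_range _) k) p
  have hBpp : ∀ (i : Fin n) (p : {p : Fin n × Fin n // p.1 ≤ p.2}),
      p.val = (i, i) → B p p = H p p * (f i)⁻¹ := by
    intro i p hp
    have hWpp : Wα p p = f i := by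
      rw [hW, Matrix.diagonal_apply_eq]
      simp [hp, hf]
    have hd : (Real.sqrt (Wα p p))⁻¹ * (Real.sqrt (Wα p p))⁻¹ = (f i)⁻¹ := by
      rw [← mul_inv, Real.mul_self_sqrt (by rw [hWpp]; exact (hfpos i).le), hWpp]
    rw [hBdef, hWih, Matrix.mul_apply]
    simp only [Matrix.diagonal_mul, Matrix.mul_diagonal, Matrix.diagonal_apply]
    rw [Finset.sum_eq_single p]
    · simp only [if_pos rfl]
      calc (Real.sqrt (Wα p p))⁻¹ * H p p * (Real.sqrt (Wα p p))⁻¹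
          = H p p * ((Real.sqrt (Wα p p))⁻¹ * (Real.sqrt (Wα p p))⁻¹) := by ring
        _ = H p p * (f i)⁻¹ := by rw [hd]
    · intro q _ hq
      simp [Matrix.diagonal_apply, hq]
    · intro h
      exact absurd (Finset.mem_univ p) h
  constructor
  · set p₀ : {p : Fin n × Fin n // p.1 ≤ p.2} := ⟨(i₀, i₀), le_rfl⟩
    calc μ * (⨅ i, f i)⁻¹ = μ * (f i₀)⁻¹ := by rw [hinf]
      _ ≤ H p₀ p₀ * (f i₀)⁻¹ :=
        mul_le_mul_of_nonneg_right (hHd p₀).1 (inv_nonneg.mpr (hfpos i₀).le)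
      _ = B p₀ p₀ := (hBpp i₀ p₀ rfl).symm
      _ ≤ ⨆ k, hB.eigenvalues k := (hBd p₀).2
  · set p₁ : {p : Fin n × Fin n // p.1 ≤ p.2} := ⟨(i₁, i₁), le_rfl⟩
    calc (⨅ k, hB.eigenvalues k) ≤ B p₁ p₁ := (hBd p₁).1
      _ = H p₁ p₁ * (f i₁)⁻¹ := hBpp i₁ p₁ rfl
      _ ≤ L * (f i₁)⁻¹ :=
        mul_le_mul_of_nonneg_right (hHd p₁).2 (inv_nonneg.mpr (hfpos i₁).le)
      _ = L * (⨆ i, f i)⁻¹ := by rw [hsup]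
end

section
/- Let n ≥ 1 and let A₀ ∈ M(n,ℝ) be invertible. Then every X ∈ M(n,ℝ) admits a unique decomposition X = S A₀ + K (A₀ᵀ)^{−1} with S ∈ Sym(n) and K ∈ Skew(n); moreover, the two summands are orthogonal with respect to the Frobenius inner product: tr((S A₀)ᵀ · K (A₀ᵀ)^{−1}) = 0 for every S ∈ Sym(n) and K ∈ Skew(n). In other words, M(n,ℝ) = Sym(n)·A₀ ⊕ Skew(n)·(A₀ᵀ)^{−1} is a Frobenius-orthogonal direct sum decomposition. -/
/-!
STATEMENT 18: Frobenius-orthogonal direct sum decomposition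
`M(n,ℝ) = Sym(n)·A₀ ⊕ Skew(n)·(A₀ᵀ)⁻¹`: every `X` admits a unique
decomposition `X = S A₀ + K (A₀ᵀ)⁻¹` with `S` symmetric and `K`
skew-symmetric, and the two summands are Frobenius-orthogonal.
-/

open Matrix

private lemma trace_tt_mul_self_eq_zero {n : ℕ} {E : Matrix (Fin n) (Fin n) ℝ}
    (h : (Eᵀ * E).trace = 0) : E = 0 := by
  have key : ∀ j, ∑ i, E i j * E i j = 0 := by
    have h' : ∑ j, ∑ i, E i j * E i j = 0 := by
      simpa [Matrix.trace, Matrix.mul_apply, Matrix.diag, Matrix.transpose_apply] using h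
    have := (Finset.sum_eq_zero_iff_of_nonneg (fun j _ =>
      Finset.sum_nonneg fun i _ => mul_self_nonneg (E i j))).mp h'
    intro j; exact this j (Finset.mem_univ j)
  ext i j
  have h2 := (Finset.sum_eq_zero_iff_of_nonneg
    (fun i _ => mul_self_nonneg (E i j))).mp (key j) i (Finset.mem_univ i)
  have : E i j = 0 := by nlinarith [mul_self_nonneg (E i j)]
  simpa using this

private lemma orth {n : ℕ} (A₀ : Matrix (Fin n) (Fin n) ℝ) (hA₀ : IsUnit A₀.det)
    (S K : Matrix (Fin n) (Fin n) ℝ) (hS : Sᵀ = S) (hK : Kᵀ = -K) :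
    ((S * A₀)ᵀ * (K * (A₀ᵀ)⁻¹)).trace = 0 := by
  have hAt : IsUnit (A₀ᵀ).det := by rwa [Matrix.det_transpose]
  have hinv : (A₀ᵀ)⁻¹ * A₀ᵀ = 1 := Matrix.nonsing_inv_mul _ hAt
  have h1 : ((S * A₀)ᵀ * (K * (A₀ᵀ)⁻¹)).trace = (S * K).trace := by
    rw [Matrix.transpose_mul, hS]
    calc (A₀ᵀ * S * (K * (A₀ᵀ)⁻¹)).trace
        = ((S * (K * (A₀ᵀ)⁻¹)) * A₀ᵀ).trace := by
          rw [Matrix.mul_assoc, Matrix.trace_mul_comm]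
      _ = (S * K).trace := by
          rw [Matrix.mul_assoc, Matrix.mul_assoc, hinv, Matrix.mul_one]
  have h2 : (S * K).trace = -(S * K).trace := by
    calc (S * K).trace = ((S * K)ᵀ).trace := (Matrix.trace_transpose _).symm
      _ = (Kᵀ * Sᵀ).trace := by rw [Matrix.transpose_mul]
      _ = (-(K * S)).trace := by rw [hS, hK, Matrix.neg_mul]
      _ = -((K * S).trace) := by rw [Matrix.trace_neg]
      _ = -(S * K).trace := by rw [Matrix.trace_mul_comm]
  rw [h1]; linarith

private lemma zero_decomp {n : ℕ} (A₀ : Matrix (Fin n) (Fin n) ℝ) (hA₀ : IsUnit A₀.det)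
    (S K : Matrix (Fin n) (Fin n) ℝ) (hS : Sᵀ = S) (hK : Kᵀ = -K)
    (h : S * A₀ + K * (A₀ᵀ)⁻¹ = 0) : S = 0 ∧ K = 0 := by
  have hAt : IsUnit (A₀ᵀ).det := by rwa [Matrix.det_transpose]
  have htr : ((S * A₀)ᵀ * (K * (A₀ᵀ)⁻¹)).trace = 0 := orth A₀ hA₀ S K hS hK
  have hFE : K * (A₀ᵀ)⁻¹ = -(S * A₀) := eq_neg_of_add_eq_zero_right h
  have hE0 : S * A₀ = 0 := by
    apply trace_tt_mul_self_eq_zero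
    have : ((S * A₀)ᵀ * (S * A₀)).trace = -((S * A₀)ᵀ * (K * (A₀ᵀ)⁻¹)).trace := by
      rw [hFE, Matrix.mul_neg, Matrix.trace_neg, neg_neg]
    rw [this, htr, neg_zero]
  have hF0 : K * (A₀ᵀ)⁻¹ = 0 := by rw [hFE, hE0, neg_zero]
  constructor
  · have := congrArg (· * A₀⁻¹) hE0
    simpa [Matrix.mul_assoc, Matrix.mul_nonsing_inv _ hA₀] using this
  · have := congrArg (· * A₀ᵀ) hF0
    simpa [Matrix.mul_assoc, Matrix.nonsing_inv_mul _ hAt] using this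

theorem horizontal_vertical_decomposition
    (n : ℕ) (hn : 1 ≤ n) (A₀ : Matrix (Fin n) (Fin n) ℝ) (hA₀ : IsUnit A₀.det) :
    (∀ X : Matrix (Fin n) (Fin n) ℝ,
      ∃! p : Matrix (Fin n) (Fin n) ℝ × Matrix (Fin n) (Fin n) ℝ,
        p.1ᵀ = p.1 ∧ p.2ᵀ = -p.2 ∧ X = p.1 * A₀ + p.2 * (A₀ᵀ)⁻¹) ∧
    (∀ S K : Matrix (Fin n) (Fin n) ℝ, Sᵀ = S → Kᵀ = -K →
      ((S * A₀)ᵀ * (K * (A₀ᵀ)⁻¹)).trace = 0) := by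
  refine ⟨?_, fun S K hS hK => orth A₀ hA₀ S K hS hK⟩
  -- the linear endomorphism M ↦ (M + Mᵀ) A₀ + (M − Mᵀ) (A₀ᵀ)⁻¹
  let Φ : Matrix (Fin n) (Fin n) ℝ →ₗ[ℝ] Matrix (Fin n) (Fin n) ℝ :=
    { toFun := fun M => (M + Mᵀ) * A₀ + (M - Mᵀ) * (A₀ᵀ)⁻¹
      map_add' := by
        intro M N
        simp only [Matrix.transpose_add, Matrix.add_mul]
        rw [add_sub_add_comm, Matrix.add_mul]
        abel
      map_smul' := by
        intro c M
        simp [Matrix.transpose_smul, ← smul_sub, ← smul_add, Matrix.smul_mul] }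
  have hinj : Function.Injective Φ := by
    rw [← LinearMap.ker_eq_bot, LinearMap.ker_eq_bot']
    intro M hM
    have hS : (M + Mᵀ)ᵀ = M + Mᵀ := by
      rw [Matrix.transpose_add, Matrix.transpose_transpose]; exact add_comm _ _
    have hK : (M - Mᵀ)ᵀ = -(M - Mᵀ) := by
      rw [Matrix.transpose_sub, Matrix.transpose_transpose]; exact (neg_sub _ _).symm
    obtain ⟨h1, h2⟩ := zero_decomp A₀ hA₀ (M + Mᵀ) (M - Mᵀ) hS hK hM
    have h3 : M + M = 0 := by
      calc M + M = (M + Mᵀ) + (M - Mᵀ) := by abel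
        _ = 0 := by rw [h1, h2, add_zero]
    ext i j
    have h4 := congrFun (congrFun h3 i) j
    simp only [Matrix.add_apply, Matrix.zero_apply] at h4 ⊢
    linarith
  have hsurj : Function.Surjective Φ := (LinearMap.injective_iff_surjective).mp hinj
  intro X
  obtain ⟨M, hM⟩ := hsurj X
  refine ⟨(M + Mᵀ, M - Mᵀ), ⟨?_, ?_, ?_⟩, ?_⟩
  · rw [Matrix.transpose_add, Matrix.transpose_transpose]; exact add_comm _ _
  · rw [Matrix.transpose_sub, Matrix.transpose_transpose]; exact (neg_sub _ _).symm
  · exact hM.symm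
  · rintro ⟨S, K⟩ ⟨hS, hK, hX⟩
    have hz : (S - (M + Mᵀ)) * A₀ + (K - (M - Mᵀ)) * (A₀ᵀ)⁻¹ = 0 := by
      have hM' : X = (M + Mᵀ) * A₀ + (M - Mᵀ) * (A₀ᵀ)⁻¹ := hM.symm
      rw [Matrix.sub_mul, Matrix.sub_mul]
      rw [hX] at hM'
      -- hM' : S*A₀ + K*inv = (M+Mᵀ)*A₀ + (M−Mᵀ)*inv
      have := sub_eq_zero.mpr hM'.symm
      calc S * A₀ - (M + Mᵀ) * A₀ + (K * (A₀ᵀ)⁻¹ - (M - Mᵀ) * (A₀ᵀ)⁻¹)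
          = (S * A₀ + K * (A₀ᵀ)⁻¹) - ((M + Mᵀ) * A₀ + (M - Mᵀ) * (A₀ᵀ)⁻¹) := by abel
        _ = 0 := by rw [← hM']; abel
    have hS' : (S - (M + Mᵀ))ᵀ = S - (M + Mᵀ) := by
      rw [Matrix.transpose_sub, Matrix.transpose_add, Matrix.transpose_transpose, hS, add_comm Mᵀ M]
    have hK' : (K - (M - Mᵀ))ᵀ = -(K - (M - Mᵀ)) := by
      rw [Matrix.transpose_sub, Matrix.transpose_sub, Matrix.transpose_transpose, hK]; abel
    obtain ⟨e1, e2⟩ := zero_decomp A₀ hA₀ _ _ hS' hK' hz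
    have : S = M + Mᵀ := by rwa [sub_eq_zero] at e1
    have : K = M - Mᵀ := by rwa [sub_eq_zero] at e2
    exact Prod.ext ‹S = M + Mᵀ› ‹K = M - Mᵀ›
end

section
/- Let n ≥ 1 and let M be a real symmetric positive definite n×n matrix. Then the linear map S ↦ S M + M S is a bijection from Sym(n) to Sym(n). Consequently, for every invertible A₀ ∈ M(n,ℝ) and every Z ∈ M(n,ℝ), there is a unique S_Z ∈ Sym(n) satisfying the Lyapunov equation S_Z M + M S_Z = Z A₀ᵀ + A₀ Zᵀ with M = A₀ A₀ᵀ, and S_Z A₀ is the Frobenius-orthogonal projection of Z onto the horizontal space Sym(n)·A₀. -/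
open Matrix

private lemma trace_transpose_mul_self_eq_zero {n : ℕ}
    {X : Matrix (Fin n) (Fin n) ℝ} (h : (Xᵀ * X).trace = 0) : X = 0 := by
  have h' : ∑ j, ∑ i, X i j ^ 2 = 0 := by
    simpa [Matrix.trace, Matrix.mul_apply, Matrix.diag, sq] using h
  ext i j
  have hj := (Finset.sum_eq_zero_iff_of_nonneg (fun j _ =>
    Finset.sum_nonneg fun i _ => sq_nonneg (X i j))).mp h' j (Finset.mem_univ j)
  have hi := (Finset.sum_eq_zero_iff_of_nonneg (fun i _ =>
    sq_nonneg (X i j))).mp hj i (Finset.mem_univ i)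
  simpa using pow_eq_zero_iff (n := 2) (by norm_num) |>.mp hi

private lemma lyap_inj {n : ℕ} {M : Matrix (Fin n) (Fin n) ℝ} (hM : M.PosDef)
    {S : Matrix (Fin n) (Fin n) ℝ} (hS : Sᵀ = S) (h : S * M + M * S = 0) :
    S = 0 := by
  classical
  have hMsym : Mᵀ = M := by
    have := hM.isHermitian.eq
    rwa [conjTranspose_eq_transpose_of_trivial] at this
  obtain ⟨B, hBB, hBsym⟩ : ∃ B : Matrix (Fin n) (Fin n) ℝ, B * B = M ∧ Bᵀ = B := by
    open scoped MatrixOrder in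
    obtain ⟨B, hBsa, -, hBB'⟩ := CFC.exists_sqrt_of_isSelfAdjoint_of_quasispectrumRestricts
      (sub_zero M ▸ hM.isHermitian) (QuasispectrumRestricts.nnreal_of_nonneg (sub_zero M ▸ hM.posSemidef.nonneg))
    exact ⟨B, hBB'.trans (sub_zero M), hBsa.star_eq⟩
  -- trace (S*M*S) = 0
  have ht : ((B * S)ᵀ * (B * S)).trace = 0 := by
    have h1 : (S * (S * M + M * S)).trace = 0 := by rw [h, mul_zero, trace_zero]
    have h2 : (S * (S * M)).trace = (S * M * S).trace := by
      rw [trace_mul_comm]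
    have h3 : (S * (M * S)).trace = (S * M * S).trace := by rw [← mul_assoc]
    have h4 : (B * S)ᵀ * (B * S) = S * M * S := by
      rw [transpose_mul, hBsym, hS, mul_assoc, ← mul_assoc B B S, hBB, ← mul_assoc]
    rw [mul_add, trace_add, h2, h3] at h1
    rw [h4]
    linarith
  have hBS : B * S = 0 := trace_transpose_mul_self_eq_zero ht
  have hMS : M * S = 0 := by rw [← hBB, mul_assoc, hBS, mul_zero]
  have hMdet : IsUnit M.det := isUnit_iff_ne_zero.mpr (ne_of_gt hM.det_pos)
  calc S = M⁻¹ * (M * S) := by rw [← mul_assoc, nonsing_inv_mul M hMdet, one_mul]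
    _ = 0 := by rw [hMS, mul_zero]

private lemma lyap_core {n : ℕ} {M : Matrix (Fin n) (Fin n) ℝ} (hM : M.PosDef)
    {T : Matrix (Fin n) (Fin n) ℝ} (hT : Tᵀ = T) :
    ∃! S : Matrix (Fin n) (Fin n) ℝ, Sᵀ = S ∧ S * M + M * S = T := by
  classical
  have hMsym : Mᵀ = M := by
    have := hM.isHermitian.eq
    rwa [conjTranspose_eq_transpose_of_trivial] at this
  set Sym : Submodule ℝ (Matrix (Fin n) (Fin n) ℝ) :=
    { carrier := {S | Sᵀ = S}
      add_mem' := fun {a b} ha hb => by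
        simp only [Set.mem_setOf_eq] at *
        rw [transpose_add, ha, hb]
      zero_mem' := by simp
      smul_mem' := fun c a ha => by
        simp only [Set.mem_setOf_eq] at *
        rw [transpose_smul, ha] } with hSymDef
  have memSym : ∀ S : Matrix (Fin n) (Fin n) ℝ, S ∈ Sym ↔ Sᵀ = S := fun S => Iff.rfl
  have hsymL : ∀ S : Matrix (Fin n) (Fin n) ℝ, Sᵀ = S → (S * M + M * S)ᵀ = S * M + M * S := by
    intro S hS
    rw [transpose_add, transpose_mul, transpose_mul, hMsym, hS, add_comm]
  set L : Sym →ₗ[ℝ] Sym :=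
    { toFun := fun S => ⟨S.1 * M + M * S.1, hsymL S.1 S.2⟩
      map_add' := fun S₁ S₂ => by
        ext
        simp [add_mul, mul_add]
        abel
      map_smul' := fun c S => by
        ext
        simp only [SetLike.val_smul, Matrix.smul_apply, Matrix.add_apply,
          Algebra.smul_mul_assoc, Algebra.mul_smul_comm, RingHom.id_apply,
          smul_eq_mul]
        ring } with hL
  have hinj : Function.Injective L := by
    rw [← LinearMap.ker_eq_bot, LinearMap.ker_eq_bot']
    intro S hS0
    have : S.1 * M + M * S.1 = 0 := congrArg Subtype.val hS0
    exact Subtype.ext (lyap_inj hM S.2 this)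
  have hsurj : Function.Surjective L := LinearMap.injective_iff_surjective.mp hinj
  obtain ⟨S, hSeq⟩ := hsurj ⟨T, hT⟩
  refine ⟨S.1, ⟨S.2, congrArg Subtype.val hSeq⟩, ?_⟩
  rintro S' ⟨hS'sym, hS'eq⟩
  have : L ⟨S', hS'sym⟩ = ⟨T, hT⟩ := Subtype.ext hS'eq
  have := hinj (this.trans hSeq.symm)
  exact congrArg Subtype.val this

theorem lyapunov_bijective_and_horizontal_projection
    (n : ℕ) (hn : 1 ≤ n) (M : Matrix (Fin n) (Fin n) ℝ) (hM : M.PosDef) :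
    ((∀ S : Matrix (Fin n) (Fin n) ℝ, Sᵀ = S →
        (S * M + M * S)ᵀ = S * M + M * S) ∧
      (∀ T : Matrix (Fin n) (Fin n) ℝ, Tᵀ = T →
        ∃! S : Matrix (Fin n) (Fin n) ℝ, Sᵀ = S ∧ S * M + M * S = T)) ∧
    ∀ A₀ : Matrix (Fin n) (Fin n) ℝ, IsUnit A₀.det → M = A₀ * A₀ᵀ →
      ∀ Z : Matrix (Fin n) (Fin n) ℝ,
        (∃! S : Matrix (Fin n) (Fin n) ℝ,
          Sᵀ = S ∧ S * M + M * S = Z * A₀ᵀ + A₀ * Zᵀ) ∧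
        (∀ S : Matrix (Fin n) (Fin n) ℝ,
          Sᵀ = S → S * M + M * S = Z * A₀ᵀ + A₀ * Zᵀ →
          ∀ T : Matrix (Fin n) (Fin n) ℝ, Tᵀ = T →
            ((T * A₀)ᵀ * (Z - S * A₀)).trace = 0) := by
  have hMsym : Mᵀ = M := by
    have := hM.isHermitian.eq
    rwa [conjTranspose_eq_transpose_of_trivial] at this
  refine ⟨⟨fun S hS => by rw [transpose_add, transpose_mul, transpose_mul, hMsym, hS, add_comm],
    fun T hT => lyap_core hM hT⟩, ?_⟩
  intro A₀ hA₀ hMA Z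
  constructor
  · refine lyap_core hM ?_
    rw [transpose_add, transpose_mul, transpose_mul, transpose_transpose,
      transpose_transpose, add_comm]
  · intro S hS hSeq T hT
    -- key trace identities
    have key : (T * (S * M)).trace = (T * (Z * A₀ᵀ)).trace := by
      have h1 : (T * (M * S)).trace = (T * (S * M)).trace := by
        conv_lhs => rw [← trace_transpose]
        rw [transpose_mul, transpose_mul, hMsym, hS, hT, trace_mul_cycle, mul_assoc]
      have h2 : (T * (A₀ * Zᵀ)).trace = (T * (Z * A₀ᵀ)).trace := by
        conv_lhs => rw [← trace_transpose]
        rw [transpose_mul, transpose_mul, transpose_transpose, hT,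
          trace_mul_cycle, mul_assoc]
      have h3 : (T * (S * M + M * S)).trace = (T * (Z * A₀ᵀ + A₀ * Zᵀ)).trace := by
        rw [hSeq]
      rw [mul_add, mul_add, trace_add, trace_add, h1, h2] at h3
      linarith
    have expand : (T * A₀)ᵀ * (Z - S * A₀) = A₀ᵀ * T * Z - A₀ᵀ * T * (S * A₀) := by
      rw [transpose_mul, hT, mul_sub]
    rw [expand, trace_sub]
    have e1 : (A₀ᵀ * T * Z).trace = (T * (Z * A₀ᵀ)).trace := by
      rw [trace_mul_cycle, trace_mul_comm]
    have e2 : (A₀ᵀ * T * (S * A₀)).trace = (T * (S * M)).trace := by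
      rw [trace_mul_cycle, mul_assoc S A₀ A₀ᵀ, ← hMA, trace_mul_comm]
    rw [e1, e2, key, sub_self]
end
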